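/- Characterization of the ESS operator for communication games (Theorem 4.2): Let Φ : F_G → F_G be an operator. Then Φ is an efficient-fair extension operator satisfying (WEES) and (ET) such that Φ(f) satisfies (f-FDS) for every f ∈ F_G, if and only if for every f ∈ F_G, every communication game (v,g) and every i ∈ N, Φ_i(f)(v,g) = f_i(v,g) + (1/n)·(v(N) − Σ_{k∈N} f_k(v,g)). -/

import Mathlib

/-!
Theorem 4.2: characterization of the ESS operator as the unique efficient-fair
extension operator for communication games.
-/

namespace Stmt4

/-- A TU-game on the player set `N`: a function on coalitions vanishing at `∅`. -/
abbrev Game (N : Type*) := {v : Finset N → ℝ // v ∅ = 0}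

/-- A solution for communication games. -/
abbrev GSolution (N : Type*) := Game N → SimpleGraph N → N → ℝ

variable {N : Type*} [Fintype N] [DecidableEq N]

/-- The component of `N/g` containing the player `i`. -/
noncomputable def comp (g : SimpleGraph N) (i : N) : Finset N :=
  (Set.toFinite {j | g.Reachable i j}).toFinset

/-- Efficiency (E). -/
def Efficient (φ : GSolution N) : Prop :=
  ∀ (v : Game N) (g : SimpleGraph N), ∑ i, φ v g i = v.1 Finset.univ

/-- Fairness at `v` (FA-`v`). -/
def FAat (φ : GSolution N) (v : Game N) : Prop :=
  ∀ (g : SimpleGraph N) (i j : N), g.Adj i j →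
    φ v g i - φ v (g.deleteEdges {s(i, j)}) i =
      φ v g j - φ v (g.deleteEdges {s(i, j)}) j

/-- `f`-fair distribution of the surplus (`f`-FDS). -/
def FDS (f φ : GSolution N) : Prop :=
  ∀ (v : Game N) (g : SimpleGraph N) (i j : N),
    (1 / ((comp g i).card : ℝ)) * ∑ k ∈ comp g i, (φ v g k - f v g k) =
      (1 / ((comp g j).card : ℝ)) * ∑ k ∈ comp g j, (φ v g k - f v g k)

/-- Equal treatment (ET) for an operator on solutions of communication games. -/
def ET (Φ : GSolution N → GSolution N) : Prop :=
  ∀ (f : GSolution N) (g : SimpleGraph N) (i j : N),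
    (∀ v, f v g i = f v g j) → ∀ v, Φ f v g i = Φ f v g j

/-- Weak equality for equal surplus (WEES) for an operator. -/
def WEES (Φ : GSolution N → GSolution N) : Prop :=
  ∀ (f f' : GSolution N) (g : SimpleGraph N) (i : N),
    (∀ v, (∑ k, f v g k) = ∑ k, f' v g k) → (∀ v, f v g i = f' v g i) →
    ∀ v, Φ f v g i = Φ f' v g i

/-! By (WEES), `Φ f` agrees at `(v, g)` with `Φ` of the solution that plays `f(·, g)` on every
network. That solution is trivially fair, so `Φ` of it is fair at `v`. By induction on the network,
fairness along a link `ij`, together with the induction hypothesis at `g - ij`, forces the surplus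
over `f` to coincide at `i` and `j`; so the surplus is constant on components, (`f`-FDS) makes it
constant on `N`, and efficiency determines the constant. -/

lemma _root_.SimpleGraph.deleteEdges_lt_of_adj {V : Type*} {G : SimpleGraph V} {a b : V}
    (h : G.Adj a b) : G.deleteEdges {s(a, b)} < G :=
  (G.deleteEdges_le _).lt_of_ne fun he => by rw [← he] at h; simp at h

theorem _root_.SimpleGraph.Reachable.apply_eq_of_adj {V α : Type*} {G : SimpleGraph V} (s : V → α)
    (hs : ∀ a b, G.Adj a b → s a = s b) {a b : V} (h : G.Reachable a b) : s a = s b := by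
  simpa [Relation.reflTransGen_eq_self] using ((G.reachable_iff_reflTransGen a b).1 h).lift s hs

section

omit [DecidableEq N]

lemma mem_comp_iff {g : SimpleGraph N} {i j : N} : j ∈ comp g i ↔ g.Reachable i j := by
  simp [comp]

lemma average_comp_eq_of_adj_eq (g : SimpleGraph N) (s : N → ℝ)
    (hs : ∀ a b, g.Adj a b → s a = s b) (i : N) :
    (1 / ((comp g i).card : ℝ)) * ∑ k ∈ comp g i, s k = s i := by
  have hcard : ((comp g i).card : ℝ) ≠ 0 :=
    Nat.cast_ne_zero.2 (Finset.card_ne_zero_of_mem (mem_comp_iff.2 (SimpleGraph.Reachable.refl i)))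
  rw [Finset.sum_congr rfl fun k hk => ((mem_comp_iff.1 hk).apply_eq_of_adj s hs).symm,
    Finset.sum_const, nsmul_eq_mul]
  field_simp

lemma eq_add_inv_card_mul_of_sub_eq_sub (x y : N → ℝ) (h : ∀ a b, x a - y a = x b - y b) (i : N) :
    x i = y i + (1 / (Fintype.card N : ℝ)) * (∑ k, x k - ∑ k, y k) := by
  have hcard : (Fintype.card N : ℝ) ≠ 0 := Nat.cast_ne_zero.2 (Fintype.card_pos_iff.2 ⟨i⟩).ne'
  rw [← Finset.sum_sub_distrib, Finset.sum_congr rfl fun k _ => h k i, Finset.sum_const,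
    Finset.card_univ, nsmul_eq_mul]
  field_simp
  ring

/-- The egalitarian surplus sharing (ESS) operator. -/
noncomputable def ess (f : GSolution N) : GSolution N := fun v g i =>
  f v g i + (1 / (Fintype.card N : ℝ)) * (v.1 Finset.univ - ∑ k, f v g k)

lemma ess_sub_self (f : GSolution N) (v : Game N) (g : SimpleGraph N) (i : N) :
    ess f v g i - f v g i = (1 / (Fintype.card N : ℝ)) * (v.1 Finset.univ - ∑ k, f v g k) :=
  add_sub_cancel_left _ _

lemma efficient_ess [Nonempty N] (f : GSolution N) : Efficient (ess f) := by
  intro v g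
  have hcard : (Fintype.card N : ℝ) ≠ 0 := Nat.cast_ne_zero.2 Fintype.card_ne_zero
  simp only [ess, Finset.sum_add_distrib, Finset.sum_const, Finset.card_univ, nsmul_eq_mul]
  field_simp
  ring

lemma faAt_ess {f : GSolution N} {v : Game N} (hf : FAat f v) : FAat (ess f) v := by
  intro g i j hij
  simp only [ess]
  linarith [hf g i j hij]

lemma wees_ess : WEES (ess (N := N)) := by
  intro f f' g i hsum hi v
  simp only [ess, hsum v, hi v]

lemma et_ess : ET (ess (N := N)) := by
  intro f g i j hij v
  simp only [ess, hij v]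

lemma fds_ess (f : GSolution N) : FDS f (ess f) := by
  intro v g i j
  simp only [ess_sub_self]
  rw [average_comp_eq_of_adj_eq g _ (fun _ _ _ => rfl) i,
    average_comp_eq_of_adj_eq g _ (fun _ _ _ => rfl) j]

omit [Fintype N] in
lemma faAt_of_forall_eq {f : GSolution N} {v : Game N} (hf : ∀ g g', f v g = f v g') :
    FAat f v := by
  intro g i j _
  simp [hf (g.deleteEdges _) g]

theorem sub_eq_sub_of_faAt_of_fds {φ f : GSolution N} {v : Game N}
    (hf : ∀ g g', f v g = f v g') (hFA : FAat φ v) (hFDS : FDS f φ) (g : SimpleGraph N)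
    (i j : N) : φ v g i - f v g i = φ v g j - f v g j := by
  induction g using WellFoundedLT.induction generalizing i j with
  | _ g ih =>
  have hadj : ∀ a b, g.Adj a b → φ v g a - f v g a = φ v g b - f v g b := by
    intro a b hab
    have hdel := ih _ (g.deleteEdges_lt_of_adj hab) a b
    rw [hf (g.deleteEdges _) g] at hdel
    linarith [hFA g a b hab]
  rw [← average_comp_eq_of_adj_eq g _ hadj i, ← average_comp_eq_of_adj_eq g _ hadj j]
  exact hFDS v g i j

theorem eq_ess_of_efficient_of_faAt_of_fds {φ f : GSolution N} {v : Game N}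
    (hf : ∀ g g', f v g = f v g') (hE : Efficient φ) (hFA : FAat φ v) (hFDS : FDS f φ)
    (g : SimpleGraph N) (i : N) : φ v g i = ess f v g i := by
  rw [ess, ← hE v g]
  exact eq_add_inv_card_mul_of_sub_eq_sub _ _ (sub_eq_sub_of_faAt_of_fds hf hFA hFDS g) i

end

/-- Theorem 4.2: `Φ` is an efficient-fair extension operator (it makes every
solution efficient and preserves fairness at every game where it holds)
satisfying (WEES) and (ET) such that `Φ(f)` satisfies (`f`-FDS) for all `f`,
iff `Φ` is the egalitarian surplus sharing operator. -/
theorem efficient_fair_operator [Nonempty N]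
    (Φ : GSolution N → GSolution N) :
    ((∀ f : GSolution N, Efficient (Φ f)) ∧
     (∀ (f : GSolution N) (v : Game N), FAat f v → FAat (Φ f) v) ∧
     WEES Φ ∧ ET Φ ∧ (∀ f : GSolution N, FDS f (Φ f))) ↔
      (∀ (f : GSolution N) (v : Game N) (g : SimpleGraph N) (i : N),
        Φ f v g i = f v g i +
          (1 / (Fintype.card N : ℝ)) * (v.1 Finset.univ - ∑ k, f v g k)) := by
  constructor
  · rintro ⟨hE, hFA, hW, -, hFDS⟩ f v g i
    let f₀ : GSolution N := fun w _ => f w g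
    have hf₀ : ∀ h h', f₀ v h = f₀ v h' := fun _ _ => rfl
    calc Φ f v g i = Φ f₀ v g i := hW f f₀ g i (fun _ => rfl) (fun _ => rfl) v
      _ = ess f₀ v g i :=
        eq_ess_of_efficient_of_faAt_of_fds hf₀ (hE f₀) (hFA f₀ v (faAt_of_forall_eq hf₀))
          (hFDS f₀) g i
  · intro hΦ
    obtain rfl : Φ = ess := funext fun f => funext fun v => funext fun g => funext (hΦ f v g)
    exact ⟨efficient_ess, fun _ _ => faAt_ess, wees_ess, et_ess, fds_ess⟩

end Stmt4
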